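/- Let a, b ∈ ℂ* with 1 < |a| ≤ |b|, and consider the equivalence on ℂ² \ {0}: (z,w) ∼ (z',w') iff there is n ∈ ℤ with z' = aⁿz and w' = bⁿw. Then the set F = ({|z| ≤ |a|} × {1 < |w| ≤ |b|}) ∪ ({1 < |z| ≤ |a|} × {|w| ≤ |b|}) is a fundamental domain: every point of ℂ² \ {0} is equivalent to exactly one point of F. -/

import Mathlib

/-!
Membership of `(z, w)` in `F` depends only on `(‖z‖, ‖w‖)`, which the action multiplies by
`(‖a‖ⁿ, ‖b‖ⁿ)`. For `c > 1` and `t > 0`, `cⁿ t ≤ c` holds exactly for `n` up to some index and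
`1 < cⁿ t` exactly from that same index on. If `z = 0` or `w = 0` only the other coordinate
matters; otherwise the orbit meets `F` exactly at the smaller of the two indices.
-/

/-- For `1 < c` and `0 < t`, the unique `n : ℤ` with `c ^ n * t ∈ Set.Ioc 1 c`. -/
noncomputable def hopfIndex (c t : ℝ) : ℤ := 1 - ⌈Real.logb c t⌉

lemma Real.logb_zpow_mul {c t : ℝ} (hc₀ : 0 < c) (hc₁ : c ≠ 1) (ht : 0 < t) (n : ℤ) :
    Real.logb c (c ^ n * t) = n + Real.logb c t := by
  rw [Real.logb_mul (zpow_pos hc₀ n).ne' ht.ne', ← Real.rpow_intCast, Real.logb_rpow hc₀ hc₁]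

lemma zpow_mul_le_iff_le_hopfIndex {c t : ℝ} (hc : 1 < c) (ht : 0 < t) (n : ℤ) :
    c ^ n * t ≤ c ↔ n ≤ hopfIndex c t := by
  have hc₀ : 0 < c := by linarith
  rw [← Real.logb_le_logb hc (mul_pos (zpow_pos hc₀ n) ht) hc₀,
    Real.logb_zpow_mul hc₀ hc.ne' ht, Real.logb_self_eq_one hc, hopfIndex, le_sub_comm,
    Int.ceil_le]
  push_cast
  constructor <;> intro h <;> linarith

lemma one_lt_zpow_mul_iff_hopfIndex_le {c t : ℝ} (hc : 1 < c) (ht : 0 < t) (n : ℤ) :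
    1 < c ^ n * t ↔ hopfIndex c t ≤ n := by
  have hc₀ : 0 < c := by linarith
  rw [← Real.logb_lt_logb_iff hc one_pos (mul_pos (zpow_pos hc₀ n) ht),
    Real.logb_zpow_mul hc₀ hc.ne' ht, Real.logb_one, hopfIndex,
    show 1 - ⌈Real.logb c t⌉ ≤ n ↔ -n < ⌈Real.logb c t⌉ by omega,
    Int.lt_ceil]
  push_cast
  constructor <;> intro h <;> linarith

/-- The domain `F` read on the moduli `x = ‖z‖`, `y = ‖w‖`. -/
def InHopfDomain (A B x y : ℝ) : Prop :=
  x ≤ A ∧ 1 < y ∧ y ≤ B ∨ 1 < x ∧ x ≤ A ∧ y ≤ B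

lemma exists_inHopfDomain_zpow_mul_iff {A B x y : ℝ} (hA : 1 < A) (hB : 1 < B)
    (hx : 0 ≤ x) (hy : 0 ≤ y) (hxy : x ≠ 0 ∨ y ≠ 0) :
    ∃ n₀ : ℤ, ∀ n : ℤ, InHopfDomain A B (A ^ n * x) (B ^ n * y) ↔ n = n₀ := by
  unfold InHopfDomain
  rcases hx.eq_or_lt with rfl | hx
  · have hy : 0 < y := hy.lt_of_ne' (hxy.resolve_left (by simp))
    refine ⟨hopfIndex B y, fun n => ?_⟩
    rw [zpow_mul_le_iff_le_hopfIndex hB hy, one_lt_zpow_mul_iff_hopfIndex_le hB hy, mul_zero]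
    constructor
    · rintro (⟨-, h₁, h₂⟩ | ⟨h, -⟩)
      · omega
      · linarith
    · intro h
      exact Or.inl ⟨by linarith, by omega, by omega⟩
  rcases hy.eq_or_lt with rfl | hy
  · refine ⟨hopfIndex A x, fun n => ?_⟩
    rw [zpow_mul_le_iff_le_hopfIndex hA hx, one_lt_zpow_mul_iff_hopfIndex_le hA hx, mul_zero]
    constructor
    · rintro (⟨-, h, -⟩ | ⟨h₁, h₂, -⟩)
      · linarith
      · omega
    · intro h
      exact Or.inr ⟨by omega, by omega, by linarith⟩
  refine ⟨min (hopfIndex A x) (hopfIndex B y), fun n => ?_⟩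
  rw [zpow_mul_le_iff_le_hopfIndex hA hx, one_lt_zpow_mul_iff_hopfIndex_le hA hx,
    zpow_mul_le_iff_le_hopfIndex hB hy, one_lt_zpow_mul_iff_hopfIndex_le hB hy]
  omega

theorem hopf_fundamental_domain
    (a b : ℂ) (ha : 1 < ‖a‖) (hab : ‖a‖ ≤ ‖b‖)
    (F : Set (ℂ × ℂ))
    (hF : F = {p : ℂ × ℂ | ‖p.1‖ ≤ ‖a‖ ∧
                1 < ‖p.2‖ ∧ ‖p.2‖ ≤ ‖b‖} ∪
              {p : ℂ × ℂ | 1 < ‖p.1‖ ∧ ‖p.1‖ ≤ ‖a‖ ∧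
                ‖p.2‖ ≤ ‖b‖}) :
    ∀ p : ℂ × ℂ, p ≠ (0, 0) →
      ∃! q : ℂ × ℂ, q ∈ F ∧ ∃ n : ℤ, q = (a ^ n * p.1, b ^ n * p.2) := by
  intro p hp
  have hmem (n : ℤ) : (a ^ n * p.1, b ^ n * p.2) ∈ F ↔
      InHopfDomain ‖a‖ ‖b‖ (‖a‖ ^ n * ‖p.1‖) (‖b‖ ^ n * ‖p.2‖) := by
    simp only [hF, Set.mem_union, Set.mem_ofPred_eq, norm_mul, norm_zpow, InHopfDomain]
  have hp' : ‖p.1‖ ≠ 0 ∨ ‖p.2‖ ≠ 0 := by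
    simpa [Prod.ext_iff, imp_iff_not_or] using hp
  obtain ⟨n₀, hn₀⟩ := exists_inHopfDomain_zpow_mul_iff ha (ha.trans_le hab)
    (norm_nonneg _) (norm_nonneg _) hp'
  refine ⟨_, ⟨(hmem n₀).2 ((hn₀ n₀).2 rfl), n₀, rfl⟩, ?_⟩
  rintro q ⟨hq, m, rfl⟩
  rw [(hn₀ m).1 ((hmem m).1 hq)]
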